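/- arXiv:1803.06902 — 2 statements merged into one kernel-verified Lean document; each statement's English description precedes it below -/
import Mathlib

section
/- With Ξ = Θ₁ Σ Θ₂ a Smith factorization, univariate filter families g_j^k (k ∈ ℤ_{σ_j}, g_j^0 = h_j) satisfying ∑_{n∈ℤ} g_j^k(n) g_j^{k'}(n − σ_j m) = |σ_j| δ_{k,k'} δ(m), and b_η := (g₁^{η₁} ⊗ ⋯ ⊗ g_s^{η_s})(Θ₁^{-1}·) for η ∈ ℤ_{σ₁}×⋯×ℤ_{σ_s}, the filters satisfy the filterbank QMF identity ∑_{α∈ℤ^s} b_η(α) b_{η'}(α − Ξγ) = |det Ξ| δ_{η,η'} δ(γ) for all γ ∈ ℤ^s and all multi-indices η, η'. -/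
/-!
Substituting `α = Θ₁ β` (a bijection of `ℤ^s`, as `Θ₁` is unimodular) turns `Θ₁⁻¹ (α - Ξ γ)`
into `β - Σ m` with `m = Θ₂ γ`, so the summand becomes a tensor product over the coordinates
and the lattice sum factors into the univariate QMF sums
`∑_n g_j^{η_j}(n) g_j^{η'_j}(n - σ_j m_j) = |σ_j| δ_{η_j,η'_j} δ(m_j)`.
Their product is `|det Ξ| δ_{η,η'} δ(m)`, and `m = 0 ↔ γ = 0` because `Θ₂` is unimodular.
-/

open Matrix Function Finset

section FinsumPi

variable {ι α R : Type*} [Fintype ι] [CommSemiring R]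

theorem finsum_pi_prod (f : ι → α → R) (hf : ∀ j, (support (f j)).Finite) :
    ∑ᶠ β : ι → α, ∏ j, f j (β j) = ∏ j, ∑ᶠ n, f j n := by
  classical
  have hsupp : support (fun β : ι → α => ∏ j, f j (β j)) ⊆
      Fintype.piFinset fun j => (hf j).toFinset := by
    intro β hβ
    simp only [Finset.mem_coe, Fintype.mem_piFinset, Set.Finite.mem_toFinset]
    intro j
    by_contra h
    exact hβ (prod_eq_zero (mem_univ j) (notMem_support.mp h))
  rw [finsum_eq_sum_of_support_subset _ hsupp, ← prod_univ_sum]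
  exact prod_congr rfl fun j _ => (finsum_eq_sum _ (hf j)).symm

theorem finsum_prod_mul_prod_sub {G : Type*} [AddGroup G] (f g : ι → G → R) (d : ι → G)
    (hf : ∀ j, (support (f j)).Finite) :
    ∑ᶠ β : ι → G, (∏ j, f j (β j)) * ∏ j, g j (β j - d j) =
      ∏ j, ∑ᶠ n, f j n * g j (n - d j) := by
  simp only [← prod_mul_distrib]
  exact finsum_pi_prod (fun j n => f j n * g j (n - d j))
    fun j => (hf j).subset (support_mul_subset_left _ _)

end FinsumPi

section Unimodular

variable {n : Type*} [Fintype n] [DecidableEq n]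

theorem finsum_comp_mulVec {R M : Type*} [CommRing R] [AddCommMonoid M]
    {A B : Matrix n n R} (hAB : A * B = 1) (hBA : B * A = 1) (F : (n → R) → M) :
    ∑ᶠ β, F (A *ᵥ β) = ∑ᶠ α, F α :=
  finsum_comp _ <| bijective_iff_has_inverse.mpr
    ⟨(B *ᵥ ·), fun v => by simp only [mulVec_mulVec, hBA, one_mulVec],
      fun v => by simp only [mulVec_mulVec, hAB, one_mulVec]⟩

theorem abs_det_mul_diagonal_mul {R : Type*} [CommRing R] [LinearOrder R] [IsStrictOrderedRing R]
    {P Q : Matrix n n R} (hP : |P.det| = 1) (hQ : |Q.det| = 1) (d : n → R) :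
    |(P * diagonal d * Q).det| = ∏ i, |d i| := by
  rw [det_mul, det_mul, det_diagonal, abs_mul, abs_mul, hP, hQ, one_mul, mul_one, abs_prod]

theorem Int.abs_det_eq_one_of_mul_eq_one {A B : Matrix n n ℤ} (hAB : A * B = 1) :
    |A.det| = 1 :=
  Int.isUnit_iff_abs_eq.mp <| IsUnit.of_mul_eq_one B.det <| by rw [← det_mul, hAB, det_one]

end Unimodular

theorem filterbank_QMF_identity_general
    {s : ℕ} (Ξ Θ₁ Θ₂ Θ₁inv : Matrix (Fin s) (Fin s) ℤ)
    (σ : Fin s → ℤ) (g : Fin s → ℤ → ℤ → ℝ)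
    -- Smith factorization
    (hSmith : Ξ = Θ₁ * Matrix.diagonal σ * Θ₂)
    (hΘ₂ : |Θ₂.det| = 1)
    (hΘ₁inv : Θ₁ * Θ₁inv = 1 ∧ Θ₁inv * Θ₁ = 1)
    -- finite support of the univariate filters
    (hfin : ∀ j k, (Function.support (g j k)).Finite)
    -- univariate QMF relations: ∑_n g_j^k(n) g_j^{k'}(n − σ_j m) = |σ_j| δ_{k,k'} δ(m)
    (hQMF : ∀ j : Fin s, ∀ k k' : ℤ, 0 ≤ k → k < σ j → 0 ≤ k' → k' < σ j →
      ∀ m : ℤ, ∑ᶠ n : ℤ, g j k n * g j k' (n - σ j * m) =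
        |(σ j : ℝ)| * (if k = k' then (1 : ℝ) else 0) * (if m = 0 then (1 : ℝ) else 0))
    -- the filterbank filters b_η
    (b : (Fin s → ℤ) → (Fin s → ℤ) → ℝ)
    (hb : ∀ η α : Fin s → ℤ, b η α = ∏ j : Fin s, g j (η j) (Θ₁inv.mulVec α j)) :
    ∀ η η' : Fin s → ℤ,
      (∀ j, 0 ≤ η j ∧ η j < σ j) → (∀ j, 0 ≤ η' j ∧ η' j < σ j) →
      ∀ γ : Fin s → ℤ,
        ∑ᶠ α : Fin s → ℤ, b η α * b η' (α - Ξ.mulVec γ) =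
          |(Ξ.det : ℝ)| * (if η = η' then (1 : ℝ) else 0) *
            (if γ = 0 then (1 : ℝ) else 0) := by
  intro η η' hη hη' γ
  obtain ⟨hΘ₁Θ₁inv, hΘ₁invΘ₁⟩ := hΘ₁inv
  set m := Θ₂ *ᵥ γ
  have hshift (β : Fin s → ℤ) :
      Θ₁inv *ᵥ (Θ₁ *ᵥ β - Ξ *ᵥ γ) = fun j => β j - σ j * m j := by
    ext j
    simp only [mulVec_sub, mulVec_mulVec, hSmith, ← Matrix.mul_assoc, hΘ₁invΘ₁, Matrix.one_mul,
      one_mulVec]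
    rw [← mulVec_mulVec, Pi.sub_apply, mulVec_diagonal]
  have hdet : |(Ξ.det : ℝ)| = ∏ j, |(σ j : ℝ)| := by
    rw [hSmith]
    exact_mod_cast abs_det_mul_diagonal_mul
      (Int.abs_det_eq_one_of_mul_eq_one hΘ₁Θ₁inv) hΘ₂ σ
  have hm : m = 0 ↔ γ = 0 :=
    (mulVec_injective_of_det_ne_zero (by grind)).eq_iff' (mulVec_zero Θ₂)
  calc ∑ᶠ α, b η α * b η' (α - Ξ *ᵥ γ)
      = ∑ᶠ β : Fin s → ℤ, (∏ j, g j (η j) (β j)) * ∏ j, g j (η' j) (β j - σ j * m j) := by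
        rw [← finsum_comp_mulVec hΘ₁Θ₁inv hΘ₁invΘ₁]
        simp only [hb, hshift, mulVec_mulVec, hΘ₁invΘ₁, one_mulVec]
    _ = ∏ j, ∑ᶠ n, g j (η j) n * g j (η' j) (n - σ j * m j) :=
        finsum_prod_mul_prod_sub _ _ _ fun j => hfin j (η j)
    _ = ∏ j, |(σ j : ℝ)| * (if η j = η' j then 1 else 0) * (if m j = 0 then 1 else 0) :=
        prod_congr rfl fun j _ => hQMF j _ _ (hη j).1 (hη j).2 (hη' j).1 (hη' j).2 (m j)
    _ = _ := by
        rw [prod_mul_distrib, prod_mul_distrib, Fintype.prod_boole, Fintype.prod_boole, hdet]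
        simp only [← hm, funext_iff, Pi.zero_apply]
        congr

/-- Given a Smith factorization `Ξ = Θ₁ Σ Θ₂` and univariate orthogonal filter
families `g_j^k`, `k ∈ ℤ_{σ_j}`, the filters
`b_η := (g₁^{η₁} ⊗ ⋯ ⊗ g_s^{η_s})(Θ₁^{-1}·)`, `η ∈ ℤ_{σ₁}×⋯×ℤ_{σ_s}`,
satisfy the filterbank QMF identity
`∑_α b_η(α) b_{η'}(α − Ξγ) = |det Ξ| δ_{η,η'} δ(γ)`. -/
theorem filterbank_QMF_identity
    {s : ℕ} (Ξ Θ₁ Θ₂ Θ₁inv : Matrix (Fin s) (Fin s) ℤ)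
    (σ : Fin s → ℤ) (g : Fin s → ℤ → ℤ → ℝ)
    -- Smith factorization
    (hSmith : Ξ = Θ₁ * Matrix.diagonal σ * Θ₂)
    (hΘ₁ : |Θ₁.det| = 1) (hΘ₂ : |Θ₂.det| = 1)
    (hΘ₁inv : Θ₁ * Θ₁inv = 1 ∧ Θ₁inv * Θ₁ = 1)
    -- finite support of the univariate filters
    (hfin : ∀ j k, (Function.support (g j k)).Finite)
    -- univariate QMF relations: ∑_n g_j^k(n) g_j^{k'}(n − σ_j m) = |σ_j| δ_{k,k'} δ(m)
    (hQMF : ∀ j : Fin s, ∀ k k' : ℤ, 0 ≤ k → k < σ j → 0 ≤ k' → k' < σ j →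
      ∀ m : ℤ, ∑ᶠ n : ℤ, g j k n * g j k' (n - σ j * m) =
        |(σ j : ℝ)| * (if k = k' then (1 : ℝ) else 0) * (if m = 0 then (1 : ℝ) else 0))
    -- the filterbank filters b_η
    (b : (Fin s → ℤ) → (Fin s → ℤ) → ℝ)
    (hb : ∀ η α : Fin s → ℤ, b η α = ∏ j : Fin s, g j (η j) (Θ₁inv.mulVec α j)) :
    ∀ η η' : Fin s → ℤ,
      (∀ j, 0 ≤ η j ∧ η j < σ j) → (∀ j, 0 ≤ η' j ∧ η' j < σ j) →
      ∀ γ : Fin s → ℤ,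
        ∑ᶠ α : Fin s → ℤ, b η α * b η' (α - Ξ.mulVec γ) =
          |(Ξ.det : ℝ)| * (if η = η' then (1 : ℝ) else 0) *
            (if γ = 0 then (1 : ℝ) else 0) :=
  filterbank_QMF_identity_general Ξ Θ₁ Θ₂ Θ₁inv σ g hSmith hΘ₂ hΘ₁inv hfin hQMF b hb
end

section
/- For Ξ_ε = Ξ_{ε_n}⋯Ξ_{ε_1} as above, the 1-norm bound ‖Ξ_ε^{-1}‖₁ ≤ σ₂^{-n}(1 + (σ₂/σ₁)^n) holds, and consequently ‖Ξ_ε^{-1}‖₁^{1/n} < (1 + (σ₂/σ₁)^n)^{1/n}/σ₂ < 1 for all sufficiently large n uniformly in ε ∈ ℤ_s^n; hence the family {Ξ_j^{-1} : j ∈ ℤ_s} is jointly contractive. -/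
/-! Codimension-1 shears and anisotropic dilations in dimension `s = m + 1`.
The index set for the digits is `Fin (m+1) = ℤ_s`; the digit `0` corresponds to
`e₀ = 0` (no shear), and the digit `j+1` corresponds to the canonical unit
vector `e_{j+1}` of `ℝ^{s-1} = ℝ^m`, which has its `1` in position `j`. -/

/-- The vector `e_j ∈ ℝ^{s-1}` (`e₀ = 0`). -/
def unitE (m : ℕ) (j : Fin (m + 1)) : Fin m → ℝ :=
  fun i => if (i : ℕ) + 1 = (j : ℕ) then 1 else 0

/-- The shear `Γ_j = [[I_{s−1}, −e_j],[0,1]]` (so `Γ₀ = I`). -/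
def shearGamma (m : ℕ) (j : Fin (m + 1)) :
    Matrix (Fin (m + 1)) (Fin (m + 1)) ℝ :=
  fun i k =>
    if (i : ℕ) < m then
      if (k : ℕ) < m then (if i = k then 1 else 0)
      else -(if (i : ℕ) + 1 = (j : ℕ) then 1 else 0)
    else (if k = i then 1 else 0)

/-- The diagonal dilation `Ξ₀ = diag(σ₁ I_{s-1}, σ₂)`. -/
def xiZero (m : ℕ) (σ₁ σ₂ : ℝ) : Matrix (Fin (m + 1)) (Fin (m + 1)) ℝ :=
  Matrix.diagonal (fun i => if (i : ℕ) < m then σ₁ else σ₂)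

/-- The sheared dilation `Ξ_j = [[σ₁ I_{s−1}, (σ₂ − σ₁)e_j],[0, σ₂]]`. -/
def xiMat (m : ℕ) (σ₁ σ₂ : ℝ) (j : Fin (m + 1)) :
    Matrix (Fin (m + 1)) (Fin (m + 1)) ℝ :=
  fun i k =>
    if (i : ℕ) < m then
      if (k : ℕ) < m then (if i = k then σ₁ else 0)
      else (σ₂ - σ₁) * (if (i : ℕ) + 1 = (j : ℕ) then 1 else 0)
    else (if k = i then σ₂ else 0)

/-- `[[σ₁^{-1} I_{s−1}, ((σ₁−σ₂)/(σ₁σ₂)) e_j],[0, σ₂^{-1}]]`, the claimed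
inverse of `Ξ_j`. -/
noncomputable def xiInvMat (m : ℕ) (σ₁ σ₂ : ℝ) (j : Fin (m + 1)) :
    Matrix (Fin (m + 1)) (Fin (m + 1)) ℝ :=
  fun i k =>
    if (i : ℕ) < m then
      if (k : ℕ) < m then (if i = k then σ₁⁻¹ else 0)
      else ((σ₁ - σ₂) / (σ₁ * σ₂)) * (if (i : ℕ) + 1 = (j : ℕ) then 1 else 0)
    else (if k = i then σ₂⁻¹ else 0)

/-- The product `Ξ_ε = Ξ_{ε_n} ⋯ Ξ_{ε_1}` for a digit sequence `ε ∈ ℤ_s^n`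
(here `ε t` corresponds to `ε_{t+1}`, so the factor for `ε 0` is applied first,
i.e. stands rightmost). -/
noncomputable def xiProd (m : ℕ) (σ₁ σ₂ : ℝ) {n : ℕ} (ε : Fin n → Fin (m + 1)) :
    Matrix (Fin (m + 1)) (Fin (m + 1)) ℝ :=
  ((List.ofFn fun t => xiMat m σ₁ σ₂ (ε t)).reverse).prod

/-- The vector `p_ε(x) = (1−x) ∑_{k=1}^n x^{k−1} e_{ε_k}`, evaluated at
`x = σ₂/σ₁`. -/
noncomputable def pEps (m : ℕ) (σ₁ σ₂ : ℝ) {n : ℕ} (ε : Fin n → Fin (m + 1)) :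
    Fin m → ℝ :=
  fun i => (1 - σ₂ / σ₁) *
    ∑ t : Fin n, (σ₂ / σ₁) ^ (t : ℕ) * (if (i : ℕ) + 1 = (ε t : ℕ) then 1 else 0)

/-- The explicit form `[[σ₁^n I, −σ₁^n p_ε(σ₂/σ₁)],[0, σ₂^n]]` of `Ξ_ε`. -/
noncomputable def xiEpsMat (m : ℕ) (σ₁ σ₂ : ℝ) {n : ℕ} (ε : Fin n → Fin (m + 1)) :
    Matrix (Fin (m + 1)) (Fin (m + 1)) ℝ :=
  fun i k =>
    if hi : (i : ℕ) < m then
      if (k : ℕ) < m then (if i = k then σ₁ ^ n else 0)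
      else -σ₁ ^ n * pEps m σ₁ σ₂ ε ⟨i, hi⟩
    else (if k = i then σ₂ ^ n else 0)

/-- The explicit form `[[σ₁^{-n} I, σ₂^{-n} p_ε(σ₂/σ₁)],[0, σ₂^{-n}]]` of
`Ξ_ε^{-1}`. -/
noncomputable def xiEpsInvMat (m : ℕ) (σ₁ σ₂ : ℝ) {n : ℕ}
    (ε : Fin n → Fin (m + 1)) : Matrix (Fin (m + 1)) (Fin (m + 1)) ℝ :=
  fun i k =>
    if hi : (i : ℕ) < m then
      if (k : ℕ) < m then (if i = k then (σ₁⁻¹) ^ n else 0)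
      else (σ₂⁻¹) ^ n * pEps m σ₁ σ₂ ε ⟨i, hi⟩
    else (if k = i then (σ₂⁻¹) ^ n else 0)

/-- The matrix norm `‖A‖₁` used in the paper: the maximum of the absolute row
sums (i.e. the operator norm as computed in the paper's estimate
`‖Ξ_ε^{-1}‖₁ ≤ max{σ₂^{-n}, σ₁^{-n} + σ₂^{-n}|p_ε(σ₂/σ₁)|}`). -/
noncomputable def matNorm1 {m : ℕ} (A : Matrix (Fin (m + 1)) (Fin (m + 1)) ℝ) : ℝ :=
  Finset.univ.sup' Finset.univ_nonempty (fun i => ∑ k : Fin (m + 1), |A i k|)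

/-! Every `Ξ_j` and `Ξ_j⁻¹` has the block form `[[a I, v], [0, b]]`, and such matrices multiply
as `[[a a' I, a v' + b' v], [0, b b']]`. Hence `Ξ_ε⁻¹ = Ξ_{ε_1}⁻¹ ⋯ Ξ_{ε_n}⁻¹` has diagonal
blocks `σ₁⁻ⁿ I`, `σ₂⁻ⁿ` and off-diagonal column `σ₂⁻ⁿ p_ε(σ₂/σ₁)`, where
`0 ≤ p_ε ≤ 1 - (σ₂/σ₁)ⁿ` entrywise by the geometric sum. Every absolute row sum is then at most
`σ₁⁻ⁿ + σ₂⁻ⁿ (1 - (σ₂/σ₁)ⁿ) = σ₂⁻ⁿ`. Taking `n`-th roots gives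
`σ₂⁻¹ < (1 + (σ₂/σ₁)ⁿ)^{1/n} / σ₂`, and the right side is `< 1` since
`1 + (σ₂/σ₁)ⁿ < 2 ≤ σ₂ⁿ` for the integer `σ₂ ≥ 2`. -/

namespace Matrix

variable {R : Type*} {m : ℕ}

/-- The block matrix `[[a I, v], [0, b]]` with respect to `Fin (m + 1) = Fin m ⊕ {Fin.last m}`. -/
def upperBlock [Zero R] (a b : R) (v : Fin m → R) : Matrix (Fin (m + 1)) (Fin (m + 1)) R :=
  fun i k =>
    if hi : (i : ℕ) < m then
      if (k : ℕ) < m then (if i = k then a else 0) else v ⟨i, hi⟩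
    else (if k = i then b else 0)

section Zero

variable [Zero R] (a b : R) (v : Fin m → R) (i k : Fin m)

@[simp]
theorem upperBlock_castSucc_castSucc :
    upperBlock a b v i.castSucc k.castSucc = if i = k then a else 0 := by
  simp [upperBlock]

@[simp]
theorem upperBlock_castSucc_last : upperBlock a b v i.castSucc (Fin.last m) = v i := by
  simp [upperBlock]

@[simp]
theorem upperBlock_last_castSucc : upperBlock a b v (Fin.last m) k.castSucc = 0 := by
  simp [upperBlock, Fin.castSucc_ne_last]

@[simp]
theorem upperBlock_last_last : upperBlock a b v (Fin.last m) (Fin.last m) = b := by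
  simp [upperBlock]

end Zero

theorem upperBlock_mul [CommSemiring R] (a b a' b' : R) (v v' : Fin m → R) :
    upperBlock a b v * upperBlock a' b' v' = upperBlock (a * a') (b * b') (a • v' + b' • v) := by
  ext i k
  rw [mul_apply, Fin.sum_univ_castSucc]
  rcases Fin.eq_castSucc_or_eq_last i with ⟨i, rfl⟩ | rfl <;>
  rcases Fin.eq_castSucc_or_eq_last k with ⟨k, rfl⟩ | rfl <;>
  simp [mul_comm]

theorem upperBlock_one_one_zero [Semiring R] : upperBlock (1 : R) 1 (0 : Fin m → R) = 1 := by
  ext i k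
  rcases Fin.eq_castSucc_or_eq_last i with ⟨i, rfl⟩ | rfl <;>
  rcases Fin.eq_castSucc_or_eq_last k with ⟨k, rfl⟩ | rfl <;>
  simp [one_apply, Fin.castSucc_ne_last, (Fin.castSucc_ne_last _).symm]

end Matrix

open Matrix

theorem matNorm1_upperBlock_le {m : ℕ} {a b c : ℝ} {v : Fin m → ℝ}
    (hv : ∀ i, |a| + |v i| ≤ c) (hb : |b| ≤ c) : matNorm1 (upperBlock a b v) ≤ c := by
  refine Finset.sup'_le _ _ fun i _ => ?_
  rw [Fin.sum_univ_castSucc]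
  rcases Fin.eq_castSucc_or_eq_last i with ⟨i, rfl⟩ | rfl
  · simpa [apply_ite abs] using hv i
  · simpa using hb

section Xi

variable {m : ℕ} {σ₁ σ₂ : ℝ}

theorem xiMat_eq_upperBlock (j : Fin (m + 1)) :
    xiMat m σ₁ σ₂ j = upperBlock σ₁ σ₂ ((σ₂ - σ₁) • unitE m j) := by
  ext i k
  simp only [xiMat, upperBlock, unitE, Pi.smul_apply, smul_eq_mul]
  split_ifs <;> rfl

theorem xiInvMat_eq_upperBlock (j : Fin (m + 1)) :
    xiInvMat m σ₁ σ₂ j = upperBlock σ₁⁻¹ σ₂⁻¹ (((σ₁ - σ₂) / (σ₁ * σ₂)) • unitE m j) := by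
  ext i k
  simp only [xiInvMat, upperBlock, unitE, Pi.smul_apply, smul_eq_mul]
  split_ifs <;> rfl

theorem xiEpsInvMat_eq_upperBlock {n : ℕ} (ε : Fin n → Fin (m + 1)) :
    xiEpsInvMat m σ₁ σ₂ ε = upperBlock (σ₁⁻¹ ^ n) (σ₂⁻¹ ^ n) (σ₂⁻¹ ^ n • pEps m σ₁ σ₂ ε) :=
  rfl

theorem xiMat_inv (hσ₁ : σ₁ ≠ 0) (hσ₂ : σ₂ ≠ 0) (j : Fin (m + 1)) :
    (xiMat m σ₁ σ₂ j)⁻¹ = xiInvMat m σ₁ σ₂ j := by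
  refine inv_eq_right_inv ?_
  rw [xiMat_eq_upperBlock, xiInvMat_eq_upperBlock, upperBlock_mul, ← upperBlock_one_one_zero]
  congr 1
  · field_simp
  · field_simp
  · ext i
    simp only [Pi.add_apply, Pi.smul_apply, smul_eq_mul, Pi.zero_apply]
    field_simp
    ring

theorem xiProd_succ {n : ℕ} (ε : Fin (n + 1) → Fin (m + 1)) :
    xiProd m σ₁ σ₂ ε = xiMat m σ₁ σ₂ (ε (Fin.last n)) * xiProd m σ₁ σ₂ (Fin.init ε) := by
  rw [xiProd, List.ofFn_succ']
  simp [xiProd, Fin.init]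

theorem pEps_succ {n : ℕ} (ε : Fin (n + 1) → Fin (m + 1)) :
    pEps m σ₁ σ₂ ε = pEps m σ₁ σ₂ (Fin.init ε) +
      ((1 - σ₂ / σ₁) * (σ₂ / σ₁) ^ n) • unitE m (ε (Fin.last n)) := by
  ext i
  simp only [pEps, unitE, Pi.add_apply, Pi.smul_apply, smul_eq_mul]
  rw [Fin.sum_univ_castSucc, mul_add, mul_assoc]
  rfl

theorem xiEpsInvMat_zero (ε : Fin 0 → Fin (m + 1)) : xiEpsInvMat m σ₁ σ₂ ε = 1 := by
  rw [xiEpsInvMat_eq_upperBlock, ← upperBlock_one_one_zero]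
  congr 1
  ext i
  simp [pEps]

theorem xiEpsInvMat_succ (hσ₁ : σ₁ ≠ 0) (hσ₂ : σ₂ ≠ 0) {n : ℕ} (ε : Fin (n + 1) → Fin (m + 1)) :
    xiEpsInvMat m σ₁ σ₂ ε =
      xiEpsInvMat m σ₁ σ₂ (Fin.init ε) * xiInvMat m σ₁ σ₂ (ε (Fin.last n)) := by
  rw [xiEpsInvMat_eq_upperBlock, xiEpsInvMat_eq_upperBlock, xiInvMat_eq_upperBlock,
    upperBlock_mul, pEps_succ]
  congr 1
  ext i
  simp only [Pi.add_apply, Pi.smul_apply, smul_eq_mul, inv_pow, div_pow]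
  field_simp
  ring

theorem xiProd_inv (hσ₁ : σ₁ ≠ 0) (hσ₂ : σ₂ ≠ 0) {n : ℕ} (ε : Fin n → Fin (m + 1)) :
    (xiProd m σ₁ σ₂ ε)⁻¹ = xiEpsInvMat m σ₁ σ₂ ε := by
  induction n with
  | zero => simp [xiProd, xiEpsInvMat_zero]
  | succ n ih =>
    rw [xiProd_succ, Matrix.mul_inv_rev, ih, xiMat_inv hσ₁ hσ₂, xiEpsInvMat_succ hσ₁ hσ₂]

end Xi

section Bounds

theorem matNorm1_nonneg {m : ℕ} (A : Matrix (Fin (m + 1)) (Fin (m + 1)) ℝ) : 0 ≤ matNorm1 A :=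
  (Finset.sum_nonneg fun k _ => abs_nonneg (A 0 k)).trans <|
    Finset.le_sup' (fun i => ∑ k, |A i k|) (Finset.mem_univ 0)

variable {m : ℕ} {σ₁ σ₂ : ℝ}

theorem pEps_nonneg (hx₀ : 0 ≤ σ₂ / σ₁) (hx₁ : σ₂ / σ₁ ≤ 1) {n : ℕ} (ε : Fin n → Fin (m + 1))
    (i : Fin m) : 0 ≤ pEps m σ₁ σ₂ ε i :=
  mul_nonneg (sub_nonneg.2 hx₁) <| Finset.sum_nonneg fun t _ => by positivity

theorem pEps_le (hx₀ : 0 ≤ σ₂ / σ₁) (hx₁ : σ₂ / σ₁ ≤ 1) {n : ℕ} (ε : Fin n → Fin (m + 1))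
    (i : Fin m) : pEps m σ₁ σ₂ ε i ≤ 1 - (σ₂ / σ₁) ^ n := by
  calc pEps m σ₁ σ₂ ε i ≤ (1 - σ₂ / σ₁) * ∑ t : Fin n, (σ₂ / σ₁) ^ (t : ℕ) := by
        refine mul_le_mul_of_nonneg_left (Finset.sum_le_sum fun t _ => ?_) (sub_nonneg.2 hx₁)
        exact mul_le_of_le_one_right (by positivity) (by split_ifs <;> norm_num)
    _ = 1 - (σ₂ / σ₁) ^ n := by
        rw [Fin.sum_univ_eq_sum_range (fun t => (σ₂ / σ₁) ^ t), mul_comm, geom_sum_mul_neg]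

theorem matNorm1_xiEpsInvMat_le (hσ₂ : 0 < σ₂) (h : σ₂ ≤ σ₁) {n : ℕ} (ε : Fin n → Fin (m + 1)) :
    matNorm1 (xiEpsInvMat m σ₁ σ₂ ε) ≤ σ₂⁻¹ ^ n := by
  have hσ₁ : 0 < σ₁ := hσ₂.trans_le h
  have hx₀ : 0 ≤ σ₂ / σ₁ := div_nonneg hσ₂.le hσ₁.le
  have hx₁ : σ₂ / σ₁ ≤ 1 := div_le_one_of_le₀ h hσ₁.le
  rw [xiEpsInvMat_eq_upperBlock]
  refine matNorm1_upperBlock_le (fun i => ?_) (abs_of_pos (by positivity)).le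
  have hp := pEps_nonneg hx₀ hx₁ ε i
  have hpow : σ₁⁻¹ ^ n = σ₂⁻¹ ^ n * (σ₂ / σ₁) ^ n := by
    rw [← mul_pow]
    field_simp
  rw [Pi.smul_apply, smul_eq_mul, abs_of_pos (by positivity),
    abs_of_nonneg (mul_nonneg (by positivity) hp), hpow]
  calc σ₂⁻¹ ^ n * (σ₂ / σ₁) ^ n + σ₂⁻¹ ^ n * pEps m σ₁ σ₂ ε i
      ≤ σ₂⁻¹ ^ n * (σ₂ / σ₁) ^ n + σ₂⁻¹ ^ n * (1 - (σ₂ / σ₁) ^ n) := by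
        gcongr
        exact pEps_le hx₀ hx₁ ε i
    _ = σ₂⁻¹ ^ n := by ring

end Bounds

theorem xiProd_inv_norm_bound_general
    (m : ℕ) (σ₁ σ₂ : ℤ) (h₁ : σ₂ < σ₁) (h₂ : 1 < σ₂) :
    (∀ n : ℕ, ∀ ε : Fin n → Fin (m + 1),
      matNorm1 ((xiProd m (σ₁ : ℝ) (σ₂ : ℝ) ε)⁻¹) ≤
        ((σ₂ : ℝ)⁻¹) ^ n * (1 + ((σ₂ : ℝ) / (σ₁ : ℝ)) ^ n)) ∧
    ∃ N : ℕ, ∀ n ≥ N, ∀ ε : Fin n → Fin (m + 1),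
      matNorm1 ((xiProd m (σ₁ : ℝ) (σ₂ : ℝ) ε)⁻¹) ^ ((n : ℝ)⁻¹) <
          (1 + ((σ₂ : ℝ) / (σ₁ : ℝ)) ^ n) ^ ((n : ℝ)⁻¹) / (σ₂ : ℝ) ∧
        (1 + ((σ₂ : ℝ) / (σ₁ : ℝ)) ^ n) ^ ((n : ℝ)⁻¹) / (σ₂ : ℝ) < 1 := by
  have hσ₂ : (2 : ℝ) ≤ σ₂ := by exact_mod_cast h₂
  have hσ : (σ₂ : ℝ) < σ₁ := by exact_mod_cast h₁
  have hx₀ : 0 < (σ₂ : ℝ) / σ₁ := by apply div_pos <;> linarith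
  have hx₁ : (σ₂ : ℝ) / σ₁ < 1 := (div_lt_one (by linarith)).2 hσ
  have hbound (n : ℕ) (ε : Fin n → Fin (m + 1)) :
      matNorm1 ((xiProd m (σ₁ : ℝ) σ₂ ε)⁻¹) ≤ (σ₂ : ℝ)⁻¹ ^ n := by
    rw [xiProd_inv (by linarith) (by linarith)]
    exact matNorm1_xiEpsInvMat_le (by linarith) hσ.le ε
  refine ⟨fun n ε => (hbound n ε).trans ?_, 1, fun n hn ε => ⟨?_, ?_⟩⟩
  · exact le_mul_of_one_le_right (by positivity) (by linarith [pow_pos hx₀ n])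
  · have hn₀ : n ≠ 0 := by omega
    have hroot : 1 < (1 + ((σ₂ : ℝ) / σ₁) ^ n) ^ ((n : ℝ)⁻¹) :=
      Real.one_lt_rpow (by linarith [pow_pos hx₀ n]) (by positivity)
    calc matNorm1 ((xiProd m (σ₁ : ℝ) σ₂ ε)⁻¹) ^ ((n : ℝ)⁻¹)
        ≤ ((σ₂ : ℝ)⁻¹ ^ n) ^ ((n : ℝ)⁻¹) :=
          Real.rpow_le_rpow (matNorm1_nonneg _) (hbound n ε) (by positivity)
      _ = 1 / σ₂ := by rw [Real.pow_rpow_inv_natCast (by positivity) hn₀, one_div]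
      _ < _ := div_lt_div_of_pos_right hroot (by linarith)
  · rw [div_lt_one (by linarith), Real.rpow_inv_lt_iff_of_pos (by positivity) (by linarith)
      (by positivity), Real.rpow_natCast]
    calc 1 + ((σ₂ : ℝ) / σ₁) ^ n < 2 := by linarith [pow_lt_one₀ hx₀.le hx₁ (by omega : n ≠ 0)]
      _ ≤ σ₂ := hσ₂
      _ ≤ (σ₂ : ℝ) ^ n := le_self_pow₀ (by linarith) (by omega)

/-- The 1-norm bound `‖Ξ_ε^{-1}‖₁ ≤ σ₂^{-n}(1 + (σ₂/σ₁)^n)` holds; consequently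
`‖Ξ_ε^{-1}‖₁^{1/n} < (1 + (σ₂/σ₁)^n)^{1/n}/σ₂ < 1` for all sufficiently large
`n`, uniformly in `ε ∈ ℤ_s^n`: the family `{Ξ_j^{-1}}` is jointly contractive. -/
theorem xiProd_inv_norm_bound
    (m : ℕ) (hm : 1 ≤ m) (σ₁ σ₂ : ℤ) (h₁ : σ₂ < σ₁) (h₂ : 1 < σ₂) :
    (∀ n : ℕ, ∀ ε : Fin n → Fin (m + 1),
      matNorm1 ((xiProd m (σ₁ : ℝ) (σ₂ : ℝ) ε)⁻¹) ≤
        ((σ₂ : ℝ)⁻¹) ^ n * (1 + ((σ₂ : ℝ) / (σ₁ : ℝ)) ^ n)) ∧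
    ∃ N : ℕ, ∀ n ≥ N, ∀ ε : Fin n → Fin (m + 1),
      matNorm1 ((xiProd m (σ₁ : ℝ) (σ₂ : ℝ) ε)⁻¹) ^ ((n : ℝ)⁻¹) <
          (1 + ((σ₂ : ℝ) / (σ₁ : ℝ)) ^ n) ^ ((n : ℝ)⁻¹) / (σ₂ : ℝ) ∧
        (1 + ((σ₂ : ℝ) / (σ₁ : ℝ)) ^ n) ^ ((n : ℝ)⁻¹) / (σ₂ : ℝ) < 1 :=
  xiProd_inv_norm_bound_general m σ₁ σ₂ h₁ h₂
end
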